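/- Let Φ be the D_4 root system {±e_i ± e_j : 1 ≤ i < j ≤ 4} (with both sign choices, giving 24 roots), Φ_{X_1} = {±(e_i - e_j) : 1 ≤ i < j ≤ 4} and Φ_{X_2} = {±(e_1 - e_2), ±(e_3 + e_4)}. Then for any map σ: ℝ^4 → ℝ^4 given by a signed permutation with an even number of sign changes (Weyl group of D_4), |Φ_{X_2} ∩ σ(Φ_{X_1})| ≥ 2. -/

import Mathlib

/-- The `SU(4)` subsystem `Φ_{X₁} = {±(e_i - e_j)}` of `D₄`. -/
def PhiX1 : Set (Fin 4 → ℝ) :=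
  {v | ∃ i j : Fin 4, i ≠ j ∧ v = Pi.single i 1 - Pi.single j 1}

/-- The subsystem `Φ_{X₂} = {±(e₁ - e₂), ±(e₃ + e₄)}` of `D₄`. -/
def PhiX2 : Set (Fin 4 → ℝ) :=
  {v | v = Pi.single (0 : Fin 4) 1 - Pi.single 1 1 ∨
       v = Pi.single (1 : Fin 4) 1 - Pi.single 0 1 ∨
       v = Pi.single (2 : Fin 4) 1 + Pi.single 3 1 ∨
       v = -(Pi.single (2 : Fin 4) 1 + Pi.single 3 1)}

/-!
The signed permutation `g` sends the root `e_{π a} - e_{π b}` of `Φ_{X₁}` to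
`ε_a e_a - ε_b e_b`, and swapping `a, b` gives its negative. Since `∏ ε_i = 1`, either
`ε₀ = ε₁`, and `(a, b) = (0, 1)` yields `±(e₀ - e₁)`, or `ε₃ = -ε₂`, and `(a, b) = (2, 3)`
yields `±(e₂ + e₃)`; in both cases a pair `±v` of roots of `Φ_{X₂}`.
-/

theorem signedPerm_apply_single_sub_single {ι R : Type*} [DecidableEq ι] [Ring R]
    {g : (ι → R) → ι → R} {π : Equiv.Perm ι} {ε : ι → R}
    (hg : ∀ x i, g x i = ε i * x (π i)) (a b : ι) :
    g (Pi.single (π a) 1 - Pi.single (π b) 1) = Pi.single a (ε a) - Pi.single b (ε b) := by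
  funext i
  rw [hg]
  simp only [Pi.sub_apply, Pi.single_apply, π.injective.eq_iff, mul_sub, mul_ite, mul_one,
    mul_zero]
  split_ifs <;> simp_all

theorem single_sub_single_mem_image_phiX1 {g : (Fin 4 → ℝ) → Fin 4 → ℝ}
    {π : Equiv.Perm (Fin 4)} {ε : Fin 4 → ℝ} (hg : ∀ x i, g x i = ε i * x (π i))
    {a b : Fin 4} (hab : a ≠ b) :
    Pi.single a (ε a) - Pi.single b (ε b) ∈ g '' PhiX1 :=
  ⟨_, ⟨π a, π b, π.injective.ne hab, rfl⟩, signedPerm_apply_single_sub_single hg a b⟩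

theorem neg_mem_phiX2 {v : Fin 4 → ℝ} (hv : v ∈ PhiX2) : -v ∈ PhiX2 := by
  rcases hv with rfl | rfl | rfl | rfl
  · exact Or.inr (Or.inl (neg_sub _ _))
  · exact Or.inl (neg_sub _ _)
  · exact Or.inr (Or.inr (Or.inr rfl))
  · exact Or.inr (Or.inr (Or.inl (neg_neg _)))

theorem phiX2_finite : PhiX2.Finite :=
  (Set.toFinite {Pi.single (0 : Fin 4) 1 - Pi.single 1 1, Pi.single (1 : Fin 4) 1 - Pi.single 0 1,
    Pi.single (2 : Fin 4) 1 + Pi.single 3 1, -(Pi.single (2 : Fin 4) 1 + Pi.single 3 1)}).subset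
    fun v hv => by simpa [PhiX2] using hv

theorem single_sub_single_mem_phiX2_of_eq {s : ℝ} (hs : s = 1 ∨ s = -1) :
    Pi.single (0 : Fin 4) s - Pi.single 1 s ∈ PhiX2 := by
  rcases hs with rfl | rfl
  · exact Or.inl rfl
  · refine Or.inr (Or.inl ?_)
    funext k
    fin_cases k <;> simp

theorem single_sub_single_mem_phiX2_of_eq_neg {s : ℝ} (hs : s = 1 ∨ s = -1) :
    Pi.single (2 : Fin 4) s - Pi.single 3 (-s) ∈ PhiX2 := by
  rcases hs with rfl | rfl
  · exact Or.inr (Or.inr (Or.inl (by rw [Pi.single_neg, sub_neg_eq_add])))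
  · refine Or.inr (Or.inr (Or.inr ?_))
    funext k
    fin_cases k <;> simp

theorem eq_or_eq_neg_of_prod_eq_one {ε : Fin 4 → ℝ} (hε : ∀ i, ε i = 1 ∨ ε i = -1)
    (hprod : ∏ i, ε i = 1) : ε 0 = ε 1 ∨ ε 3 = -ε 2 := by
  revert hprod
  rw [Fin.prod_univ_four]
  rcases hε 0 with h0 | h0 <;> rcases hε 1 with h1 | h1 <;> rcases hε 2 with h2 | h2 <;>
    rcases hε 3 with h3 | h3 <;> norm_num [h0, h1, h2, h3]

/-- Every image of the `SU(4)` subsystem `Φ_{X₁}` under an element of the Weyl group of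
`D₄` (a signed permutation with an even number of sign changes) meets `Φ_{X₂}` in at
least two roots. -/
theorem stmt13 (g : (Fin 4 → ℝ) → (Fin 4 → ℝ))
    (hg : ∃ (π : Equiv.Perm (Fin 4)) (ε : Fin 4 → ℝ),
      (∀ i, ε i = 1 ∨ ε i = -1) ∧ (∏ i, ε i) = 1 ∧
      ∀ (x : Fin 4 → ℝ) (i : Fin 4), g x i = ε i * x (π i)) :
    2 ≤ (PhiX2 ∩ g '' PhiX1).ncard := by
  obtain ⟨π, ε, hε, hprod, hg⟩ := hg
  obtain ⟨a, b, hab, hv⟩ : ∃ a b : Fin 4, a ≠ b ∧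
      Pi.single a (ε a) - Pi.single b (ε b) ∈ PhiX2 := by
    rcases eq_or_eq_neg_of_prod_eq_one hε hprod with h | h
    · exact ⟨0, 1, by decide, h ▸ single_sub_single_mem_phiX2_of_eq (hε 0)⟩
    · exact ⟨2, 3, by decide, h ▸ single_sub_single_mem_phiX2_of_eq_neg (hε 2)⟩
  set v : Fin 4 → ℝ := Pi.single a (ε a) - Pi.single b (ε b)
  have hnv : -v = Pi.single b (ε b) - Pi.single a (ε a) := neg_sub _ _
  have hne : v ≠ -v := fun h => by
    have hva : ε a = -ε a := by simpa [v, hab] using congrFun h a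
    rcases hε a with ha | ha <;> norm_num [ha] at hva
  exact (Set.one_lt_ncard_iff (phiX2_finite.inter_of_left _)).2
    ⟨v, -v, ⟨hv, single_sub_single_mem_image_phiX1 hg hab⟩,
      ⟨neg_mem_phiX2 hv, hnv ▸ single_sub_single_mem_image_phiX1 hg hab.symm⟩, hne⟩
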